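/- Let n ≥ 1, let W be an n×n real doubly stochastic matrix such that every entry of W^n is strictly positive, and set ε = max_{j} min_{i} (W^n)_{ij}, so ε ∈ (0,1). Let x : ℕ → ℝ^n evolve according to x(k+1) = W(x(k) + θ(k)) with ‖θ(k)‖_∞ ≤ α ρ^k for all k, where α > 0 and ρ ∈ [0,1). Define V(x(k)) = max_i x_i(k) − min_i x_i(k). Then for every k ≥ 0, V(x(k+n)) ≤ (1 − ε) V(x(k)) + 2 α ρ^k (1 − ρ^{n+1})/(1 − ρ). -/

import Mathlib

/-!
Unrolling the recursion `n` steps gives `x (k + n) = Wⁿ x(k) + E` with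
`E = ∑_{t<n} W^(n-t) θ(k+t)`. The power `Wⁿ` is row-stochastic; if every entry of column `j₀`
of `Wⁿ` is at least `ε`, then every entry of `Wⁿ y` lies in
`[m + ε (y j₀ - m), M - ε (M - y j₀)]` with `M = max y`, `m = min y`, so
`V(Wⁿ y) ≤ (1 - ε) V(y)`. Row-stochastic matrices do not increase the sup norm, so
`‖E‖ ≤ ∑_{t<n} α ρ^(k+t)`, and adding `E` raises the spread by at most `2‖E‖`.
-/

open Finset Matrix

section Spread

variable {ι : Type*} [Fintype ι]

noncomputable def spread (y : ι → ℝ) : ℝ := (⨆ i, y i) - ⨅ i, y i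

lemma spread_add_le [Nonempty ι] (u e : ι → ℝ) : spread (u + e) ≤ spread u + 2 * ‖e‖ := by
  have habs : ∀ i, |e i| ≤ ‖e‖ := fun i => by simpa using norm_le_pi_norm e i
  have hsup : (⨆ i, (u + e) i) ≤ (⨆ i, u i) + ‖e‖ := ciSup_le fun i => by
    linarith [le_ciSup (Finite.bddAbove_range u) i, le_abs_self (e i), habs i, Pi.add_apply u e i]
  have hinf : (⨅ i, u i) - ‖e‖ ≤ ⨅ i, (u + e) i := le_ciInf fun i => by
    linarith [ciInf_le (Finite.bddBelow_range u) i, neg_abs_le (e i), habs i, Pi.add_apply u e i]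
  unfold spread
  linarith

variable [DecidableEq ι] {M : Matrix ι ι ℝ}

lemma mulVec_apply_le_of_mem_rowStochastic (hM : M ∈ rowStochastic ℝ ι) {y : ι → ℝ} {B c : ℝ}
    (hyB : ∀ j, y j ≤ B) (i j₀ : ι) (hc : c ≤ M i j₀) :
    (M *ᵥ y) i ≤ B - c * (B - y j₀) := by
  have hgap : c * (B - y j₀) ≤ ∑ j, M i j * (B - y j) :=
    calc c * (B - y j₀) ≤ M i j₀ * (B - y j₀) := by gcongr; linarith [hyB j₀]
      _ ≤ ∑ j, M i j * (B - y j) :=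
        single_le_sum (f := fun j => M i j * (B - y j))
          (fun j _ => mul_nonneg (nonneg_of_mem_rowStochastic hM) (by linarith [hyB j]))
          (mem_univ j₀)
  have hsum : ∑ j, M i j * (B - y j) = B - (M *ᵥ y) i := by
    simp only [mul_sub, sum_sub_distrib, ← sum_mul, sum_row_of_mem_rowStochastic hM, one_mul,
      mulVec, dotProduct]
  linarith

lemma spread_mulVec_le [Nonempty ι] (hM : M ∈ rowStochastic ℝ ι) (y : ι → ℝ) :
    spread (M *ᵥ y) ≤ (1 - ⨆ j, ⨅ i, M i j) * spread y := by
  obtain ⟨j₀, hj₀⟩ := Finite.exists_max fun j => ⨅ i, M i j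
  have hε : (⨆ j, ⨅ i, M i j) = ⨅ i, M i j₀ :=
    le_antisymm (ciSup_le hj₀) (le_ciSup (Finite.bddAbove_range fun j => ⨅ i, M i j) j₀)
  have hcol : ∀ i, (⨅ i, M i j₀) ≤ M i j₀ := ciInf_le (Finite.bddBelow_range _)
  have hupper : ∀ i, (M *ᵥ y) i ≤ (⨆ i, y i) - (⨅ i, M i j₀) * ((⨆ i, y i) - y j₀) :=
    fun i => mulVec_apply_le_of_mem_rowStochastic hM (le_ciSup (Finite.bddAbove_range y)) i j₀
      (hcol i)
  -- the lower bound is the upper bound for `-y`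
  have hlower : ∀ i, (⨅ i, y i) + (⨅ i, M i j₀) * (y j₀ - ⨅ i, y i) ≤ (M *ᵥ y) i := by
    intro i
    have h := mulVec_apply_le_of_mem_rowStochastic hM (y := -y) (B := -⨅ i, y i)
      (fun j => neg_le_neg (ciInf_le (Finite.bddBelow_range y) j)) i j₀ (hcol i)
    rw [mulVec_neg, Pi.neg_apply, Pi.neg_apply] at h
    linarith
  unfold spread
  rw [hε]
  linarith [ciSup_le hupper, le_ciInf hlower]

lemma norm_mulVec_le_of_mem_rowStochastic (hM : M ∈ rowStochastic ℝ ι) (v : ι → ℝ) :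
    ‖M *ᵥ v‖ ≤ ‖v‖ := by
  refine (pi_norm_le_iff_of_nonneg (norm_nonneg v)).2 fun i => ?_
  have hMij : ∀ j, 0 ≤ M i j := fun j => nonneg_of_mem_rowStochastic hM
  calc ‖(M *ᵥ v) i‖ = |∑ j, M i j * v j| := rfl
    _ ≤ ∑ j, |M i j * v j| := abs_sum_le_sum_abs _ _
    _ ≤ ∑ j, M i j * ‖v‖ := sum_le_sum fun j _ => by
        rw [abs_mul, abs_of_nonneg (hMij j)]
        exact mul_le_mul_of_nonneg_left (norm_le_pi_norm v j) (hMij j)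
    _ = ‖v‖ := by rw [← sum_mul, sum_row_of_mem_rowStochastic hM, one_mul]

lemma norm_sum_pow_mulVec_le (hM : M ∈ rowStochastic ℝ ι) {θ : ℕ → ι → ℝ} {b : ℕ → ℝ}
    (hθ : ∀ k, ‖θ k‖ ≤ b k) (k m : ℕ) :
    ‖∑ t ∈ range m, (M ^ (m - t)) *ᵥ θ (k + t)‖ ≤ ∑ t ∈ range m, b (k + t) :=
  (norm_sum_le _ _).trans <| sum_le_sum fun _ _ =>
    (norm_mulVec_le_of_mem_rowStochastic (pow_mem hM _) _).trans (hθ _)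

end Spread

lemma eq_pow_mulVec_add_sum {ι R : Type*} [Fintype ι] [DecidableEq ι] [Semiring R]
    {W : Matrix ι ι R} {x θ : ℕ → ι → R} (hdyn : ∀ k, x (k + 1) = W *ᵥ (x k + θ k)) (k m : ℕ) :
    x (k + m) = (W ^ m) *ᵥ x k + ∑ t ∈ range m, (W ^ (m - t)) *ᵥ θ (k + t) := by
  induction m with
  | zero => simp
  | succ m ih =>
    have hpow : ∀ t ∈ range m, W *ᵥ ((W ^ (m - t)) *ᵥ θ (k + t)) = (W ^ (m + 1 - t)) *ᵥ θ (k + t) :=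
      fun t ht => by
        rw [mulVec_mulVec, ← pow_succ', Nat.sub_add_comm (mem_range.1 ht).le]
    rw [← add_assoc, hdyn, ih, mulVec_add, mulVec_add, mulVec_sum, sum_congr rfl hpow,
      mulVec_mulVec, ← pow_succ', sum_range_succ, Nat.add_sub_cancel_left, pow_one, add_assoc]

lemma sum_range_mul_pow_add_le {α ρ : ℝ} (hα : 0 ≤ α) (hρ0 : 0 ≤ ρ) (hρ1 : ρ < 1) (k n : ℕ) :
    ∑ t ∈ range n, α * ρ ^ (k + t) ≤ α * ρ ^ k * ((1 - ρ ^ (n + 1)) / (1 - ρ)) := by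
  have hgeom : ∑ t ∈ range (n + 1), ρ ^ t = (1 - ρ ^ (n + 1)) / (1 - ρ) := by
    rw [geom_sum_eq hρ1.ne, ← neg_div_neg_eq, neg_sub, neg_sub]
  calc ∑ t ∈ range n, α * ρ ^ (k + t) ≤ ∑ t ∈ range (n + 1), α * ρ ^ (k + t) :=
        sum_le_sum_of_subset_of_nonneg (range_subset_range.2 n.le_succ)
          fun _ _ _ => by positivity
    _ = α * ρ ^ k * ((1 - ρ ^ (n + 1)) / (1 - ρ)) := by
        rw [← hgeom, mul_sum]
        exact sum_congr rfl fun t _ => by rw [pow_add]; ring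

theorem scda_spread_recursion_general
    (n : ℕ) (hn : 1 ≤ n) (W : Matrix (Fin n) (Fin n) ℝ)
    (hW_nonneg : ∀ i j, 0 ≤ W i j)
    (hW_row : ∀ i, ∑ j, W i j = 1)
    (x θ : ℕ → Fin n → ℝ)
    (hdyn : ∀ k, x (k + 1) = W.mulVec (x k + θ k))
    (α ρ : ℝ) (hα : 0 < α) (hρ0 : 0 ≤ ρ) (hρ1 : ρ < 1)
    (hθ : ∀ k, ‖θ k‖ ≤ α * ρ ^ k) :
    ∀ k, (⨆ i, x (k + n) i) - (⨅ i, x (k + n) i) ≤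
      (1 - ⨆ j, ⨅ i, (W ^ n) i j) * ((⨆ i, x k i) - (⨅ i, x k i)) +
        2 * α * ρ ^ k * (1 - ρ ^ (n + 1)) / (1 - ρ) := by
  intro k
  have : Nonempty (Fin n) := Fin.pos_iff_nonempty.mp hn
  have hW : W ∈ rowStochastic ℝ (Fin n) := mem_rowStochastic_iff_sum.2 ⟨hW_nonneg, hW_row⟩
  have hnoise := (norm_sum_pow_mulVec_le hW hθ k n).trans
    (sum_range_mul_pow_add_le hα.le hρ0 hρ1 k n)
  have hcontract := spread_mulVec_le (pow_mem hW n) (x k)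
  have hperturb := spread_add_le ((W ^ n) *ᵥ x k) (∑ t ∈ range n, (W ^ (n - t)) *ᵥ θ (k + t))
  rw [← eq_pow_mulVec_add_sum hdyn] at hperturb
  have hbudget : 2 * (α * ρ ^ k * ((1 - ρ ^ (n + 1)) / (1 - ρ))) =
      2 * α * ρ ^ k * (1 - ρ ^ (n + 1)) / (1 - ρ) := by ring
  unfold spread at hcontract hperturb
  linarith

/-- The spread `V(x(k)) = max_i x_i(k) − min_i x_i(k)` of the noisy consensus
iteration satisfies `V(x(k+n)) ≤ (1 − ε) V(x(k)) + 2αρ^k(1 − ρ^{n+1})/(1 − ρ)`,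
where `ε = max_j min_i (W^n)_{ij}`. -/
theorem scda_spread_recursion
    (n : ℕ) (hn : 1 ≤ n) (W : Matrix (Fin n) (Fin n) ℝ)
    (hW_nonneg : ∀ i j, 0 ≤ W i j)
    (hW_row : ∀ i, ∑ j, W i j = 1)
    (hW_col : ∀ j, ∑ i, W i j = 1)
    (hWn_pos : ∀ i j, 0 < (W ^ n) i j)
    (x θ : ℕ → Fin n → ℝ)
    (hdyn : ∀ k, x (k + 1) = W.mulVec (x k + θ k))
    (α ρ : ℝ) (hα : 0 < α) (hρ0 : 0 ≤ ρ) (hρ1 : ρ < 1)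
    (hθ : ∀ k, ‖θ k‖ ≤ α * ρ ^ k) :
    ∀ k, (⨆ i, x (k + n) i) - (⨅ i, x (k + n) i) ≤
      (1 - ⨆ j, ⨅ i, (W ^ n) i j) * ((⨆ i, x k i) - (⨅ i, x k i)) +
        2 * α * ρ ^ k * (1 - ρ ^ (n + 1)) / (1 - ρ) :=
  scda_spread_recursion_general n hn W hW_nonneg hW_row x θ hdyn α ρ hα hρ0 hρ1 hθ
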